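/- arXiv:1506.08590 — 3 statements merged into one kernel-verified Lean document; each statement's English description precedes it below -/
import Mathlib

section
/- Let (p_1, ..., p_k) be a composition of n. Then the polynomial ∏_{i=1}^n (1−z^i) is divisible in ℤ[z] by ∏_{j=1}^k ∏_{l=1}^{p_j} (1−z^l), and the quotient (the q-multinomial coefficient) is a polynomial in z with nonnegative integer coefficients. -/
open Polynomial Finset

noncomputable def Fpoly (n : ℕ) : Polynomial ℤ := ∏ i ∈ Finset.Icc 1 n, (1 - X ^ i)

lemma Fpoly_succ (n : ℕ) : Fpoly (n + 1) = Fpoly n * (1 - X ^ (n + 1)) := by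
  simpa [Fpoly] using Finset.prod_Icc_succ_top (by omega : 1 ≤ n + 1)
    (fun i => (1 : Polynomial ℤ) - X ^ i)

lemma Fpoly_zero : Fpoly 0 = 1 := by simp [Fpoly]

noncomputable def gB : ℕ → ℕ → Polynomial ℤ
  | 0, 0 => 1
  | 0, _+1 => 0
  | _+1, 0 => 1
  | m+1, r+1 => gB m r + X ^ (r+1) * gB m (r+1)

lemma one_coeff_nonneg : ∀ i, 0 ≤ (1 : Polynomial ℤ).coeff i := by
  intro i; rw [Polynomial.coeff_one]; split_ifs <;> norm_num

lemma mul_nonneg_coeff {p q : Polynomial ℤ} (hp : ∀ i, 0 ≤ p.coeff i)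
    (hq : ∀ i, 0 ≤ q.coeff i) : ∀ i, 0 ≤ (p * q).coeff i := by
  intro i
  rw [Polynomial.coeff_mul]
  exact Finset.sum_nonneg fun x _ => mul_nonneg (hp _) (hq _)

lemma gB_nonneg : ∀ m r i, 0 ≤ (gB m r).coeff i := by
  intro m
  induction m with
  | zero =>
    intro r i
    cases r with
    | zero => exact one_coeff_nonneg i
    | succ s => simp [gB]
  | succ m ih =>
    intro r i
    cases r with
    | zero => exact one_coeff_nonneg i
    | succ s =>
      simp only [gB, Polynomial.coeff_add]
      refine add_nonneg (ih s i) (mul_nonneg_coeff (fun j => ?_) (ih (s+1)) i)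
      rw [Polynomial.coeff_X_pow]
      positivity

lemma gB_eq_zero : ∀ m r, m < r → gB m r = 0 := by
  intro m
  induction m with
  | zero => intro r hr; cases r with | zero => omega | succ s => simp [gB]
  | succ m ih =>
    intro r hr
    cases r with
    | zero => omega
    | succ s => simp [gB, ih s (by omega), ih (s+1) (by omega)]

lemma gB_diag : ∀ m, gB m m = 1 := by
  intro m
  induction m with
  | zero => simp [gB]
  | succ m ih => simp [gB, ih, gB_eq_zero m (m+1) (by omega)]

lemma key : ∀ m r, r ≤ m → Fpoly m = Fpoly r * Fpoly (m - r) * gB m r := by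
  intro m
  induction m with
  | zero =>
    intro r hr
    interval_cases r
    simp [Fpoly_zero, gB]
  | succ m ih =>
    intro r hr
    cases r with
    | zero => simp [Fpoly_zero, gB]
    | succ s =>
      rcases eq_or_lt_of_le hr with h | h
      · have hsm : s = m := by omega
        subst hsm
        simp [gB_diag, Fpoly_zero]
      · have hs : s ≤ m := by omega
        have hs1 : s + 1 ≤ m := by omega
        have e1 := ih s hs
        have e2 := ih (s+1) hs1
        set d := m - (s+1) with hd
        have hms : m - s = d + 1 := by rw [hd]; omega
        have hms' : m + 1 - (s + 1) = d + 1 := by rw [hd]; omega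
        rw [hms, Fpoly_succ d] at e1
        rw [Fpoly_succ s] at e2 ⊢
        rw [hms', Fpoly_succ d, show gB (m+1) (s+1) = gB m s + X ^ (s+1) * gB m (s+1) from rfl,
          Fpoly_succ m]
        have hx : (X : Polynomial ℤ) ^ (s+1) * X ^ (d+1) = X ^ (m+1) := by
          rw [← pow_add]; congr 1; omega
        linear_combination (1 - (X : Polynomial ℤ) ^ (s+1)) * e1 +
          (X : Polynomial ℤ) ^ (s+1) * (1 - X ^ (d+1)) * e2 + Fpoly m * hx

/-- For a composition `(p_1, …, p_k)` of `n`, the polynomial `∏_{i=1}^n (1 − z^i)` is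
divisible in `ℤ[z]` by `∏_{j=1}^k ∏_{l=1}^{p_j} (1 − z^l)`, and the quotient (the
q-multinomial coefficient) has nonnegative integer coefficients. -/
theorem qMultinomial_is_polynomial_with_nonneg_coeffs {k n : ℕ}
    (p : Fin k → ℕ) (hp : ∀ j, 0 < p j) (hsum : ∑ j, p j = n) :
    ∃ Q : Polynomial ℤ,
      (∏ i ∈ Finset.Icc 1 n, (1 - (Polynomial.X : Polynomial ℤ) ^ i)) =
        (∏ j : Fin k, ∏ l ∈ Finset.Icc 1 (p j),
          (1 - (Polynomial.X : Polynomial ℤ) ^ l)) * Q ∧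
      ∀ m, 0 ≤ Q.coeff m := by
  subst hsum
  clear hp
  induction k with
  | zero => exact ⟨1, by simp, one_coeff_nonneg⟩
  | succ k ih =>
    obtain ⟨Q', hQ', hQ'nn⟩ := ih (fun j => p j.succ)
    set a := p 0 with ha0
    set s := ∑ j : Fin k, p j.succ with hs
    have hsum' : ∑ j, p j = a + s := by rw [Fin.sum_univ_succ]
    have hk := key (a + s) a (le_add_right le_rfl)
    rw [show a + s - a = s from by omega] at hk
    refine ⟨Q' * gB (a + s) a, ?_, mul_nonneg_coeff hQ'nn (gB_nonneg _ _)⟩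
    rw [hsum', Fin.prod_univ_succ]
    change Fpoly (a + s) = Fpoly a * _ * _
    rw [hk, show (Fpoly s : Polynomial ℤ) =
      (∏ j : Fin k, ∏ l ∈ Finset.Icc 1 (p j.succ),
        (1 - (X : Polynomial ℤ) ^ l)) * Q' from hQ']
    ring
end

section
/- Let (p_1,...,p_k) and (q_1,...,q_l) be two compositions of the same integer n. If ∏_{j=1}^l ∏_{a=1}^{q_j} (1−z^a) = ∏_{j=1}^k ∏_{b=1}^{p_j} (1−z^b) as polynomials in ℂ[z], then the multisets {p_1,...,p_k} and {q_1,...,q_l} coincide (in particular k = l). -/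
/-!
Write `(z;z)_m = ∏_{a=1}^m (1 - z^a)`. If `ζ` is a primitive `d`-th root of unity, it is a simple
root of `1 - z^a` exactly when `d ∣ a`, so its multiplicity in `∏_j (z;z)_{p_j}` is
`∑_j ⌊p_j / d⌋`. The polynomial identity therefore gives `∑_j ⌊p_j / d⌋ = ∑_j ⌊q_j / d⌋` for
every `d ≥ 1`. Taking `d = N` the largest part occurring in either composition, this says that
`N` occurs equally often in both; removing one copy of `N` from each and inducting recovers the
multisets.
-/

open Polynomial

noncomputable def qPochhammer (R : Type*) [CommRing R] (m : ℕ) : R[X] :=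
  ∏ a ∈ Finset.Icc 1 m, (1 - X ^ a)

theorem one_sub_X_pow_ne_zero {R : Type*} [Ring R] [Nontrivial R] {a : ℕ} (ha : 0 < a) :
    (1 - X ^ a : R[X]) ≠ 0 := by
  rw [← neg_sub, neg_ne_zero, ← C_1]
  exact X_pow_sub_C_ne_zero ha 1

theorem qPochhammer_ne_zero {R : Type*} [CommRing R] [IsDomain R] (m : ℕ) :
    qPochhammer R m ≠ 0 :=
  Finset.prod_ne_zero_iff.mpr fun _ ha => one_sub_X_pow_ne_zero (Finset.mem_Icc.mp ha).1

section RootsOfUnity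

variable {K : Type*} [Field K] [CharZero K] [DecidableEq K] {ζ : K} {d : ℕ}

theorem count_roots_one_sub_X_pow (hζ : IsPrimitiveRoot ζ d) {a : ℕ} (ha : 0 < a) :
    (1 - X ^ a : K[X]).roots.count ζ = if d ∣ a then 1 else 0 := by
  have hroots : (1 - X ^ a : K[X]).roots = nthRoots a 1 := by
    rw [nthRoots, ← roots_neg, neg_sub, C_1]
  have hnodup : (nthRoots a (1 : K)).Nodup :=
    nodup_roots (separable_X_pow_sub_C 1 (Nat.cast_ne_zero.mpr ha.ne') one_ne_zero)
  rw [hroots, Multiset.count_eq_of_nodup hnodup]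
  simp only [mem_nthRoots ha, hζ.pow_eq_one_iff_dvd]

theorem count_roots_qPochhammer (hζ : IsPrimitiveRoot ζ d) (m : ℕ) :
    (qPochhammer K m).roots.count ζ = m / d := by
  rw [qPochhammer, roots_prod _ _ (qPochhammer_ne_zero m), Multiset.count_bind,
    ← Finset.sum_eq_multiset_sum,
    Finset.sum_congr rfl fun a ha => count_roots_one_sub_X_pow hζ (Finset.mem_Icc.mp ha).1,
    Finset.sum_boole, Nat.cast_id, ← Nat.Ioc_filter_dvd_card_eq_div,
    ← Finset.Icc_add_one_left_eq_Ioc, zero_add]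

theorem count_roots_prod_qPochhammer (hζ : IsPrimitiveRoot ζ d) (s : Multiset ℕ) :
    (s.map (qPochhammer K)).prod.roots.count ζ = (s.map (· / d)).sum := by
  rw [roots_multiset_prod _ fun h0 => ?_, Multiset.count_bind, Multiset.map_map]
  · exact congrArg Multiset.sum (Multiset.map_congr rfl fun m _ => count_roots_qPochhammer hζ m)
  · obtain ⟨m, -, hm⟩ := Multiset.mem_map.mp h0
    exact qPochhammer_ne_zero m hm

end RootsOfUnity

namespace Multiset

theorem sum_map_div_eq_count {s : Multiset ℕ} {N : ℕ} (hN : 0 < N) (hs : ∀ x ∈ s, x ≤ N) :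
    (s.map (· / N)).sum = s.count N := by
  induction s using Multiset.induction with
  | empty => simp
  | cons x s ih =>
    rw [map_cons, sum_cons, ih fun y hy => hs y (mem_cons_of_mem hy), count_cons]
    rcases (hs x (mem_cons_self x s)).lt_or_eq with hx | rfl
    · simp [Nat.div_eq_of_lt hx, hx.ne']
    · simp [Nat.div_self hN, add_comm]

theorem eq_of_forall_sum_map_div_eq {s t : Multiset ℕ} (hs : ∀ x ∈ s, 0 < x)
    (ht : ∀ x ∈ t, 0 < x) (h : ∀ d, 0 < d → (s.map (· / d)).sum = (t.map (· / d)).sum) :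
    s = t := by
  induction s using Multiset.strongInductionOn generalizing t with
  | ih s ih =>
  rcases eq_or_ne (s + t) 0 with h0 | h0
  · obtain ⟨rfl, rfl⟩ := add_eq_zero.mp h0
    rfl
  obtain ⟨N, hN, hmax⟩ := exists_max_image id h0
  have hNpos : 0 < N := (mem_add.mp hN).elim (hs N) (ht N)
  have hcount : s.count N = t.count N := by
    rw [← sum_map_div_eq_count hNpos fun x hx => hmax x (mem_add.mpr (.inl hx)),
      ← sum_map_div_eq_count hNpos fun x hx => hmax x (mem_add.mpr (.inr hx))]
    exact h N hNpos
  have hNst : N ∈ s ∧ N ∈ t := by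
    have := count_pos.mpr hN
    rw [count_add] at this
    simp only [← count_pos]
    omega
  have herase : s.erase N = t.erase N := by
    refine ih _ (erase_lt.mpr hNst.1) (fun x hx => hs x (mem_of_mem_erase hx))
      (fun x hx => ht x (mem_of_mem_erase hx)) fun d hd => ?_
    have hd := h d hd
    rw [← sum_map_erase hNst.1, ← sum_map_erase hNst.2] at hd
    exact Nat.add_left_cancel hd
  rw [← cons_erase hNst.1, ← cons_erase hNst.2, herase]

end Multiset

theorem poly_identity_forces_same_composition_general {k l : ℕ}
    (p : Fin k → ℕ) (q : Fin l → ℕ) (hp : ∀ j, 0 < p j) (hq : ∀ j, 0 < q j)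
    (h : (∏ j : Fin l, ∏ a ∈ Finset.Icc 1 (q j),
            (1 - (Polynomial.X : Polynomial ℂ) ^ a)) =
          ∏ j : Fin k, ∏ b ∈ Finset.Icc 1 (p j),
            (1 - (Polynomial.X : Polynomial ℂ) ^ b)) :
    (Finset.univ.val.map p = Finset.univ.val.map q) ∧ k = l := by
  have hprod : ((Finset.univ.val.map p).map (qPochhammer ℂ)).prod =
      ((Finset.univ.val.map q).map (qPochhammer ℂ)).prod := by
    simp only [Multiset.map_map, Function.comp_def, ← Finset.prod_eq_multiset_prod]
    exact h.symm
  have hpq : Finset.univ.val.map p = Finset.univ.val.map q := by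
    refine Multiset.eq_of_forall_sum_map_div_eq (by simpa using hp) (by simpa using hq)
      fun d hd => ?_
    have hζ := Complex.isPrimitiveRoot_exp d hd.ne'
    rw [← count_roots_prod_qPochhammer hζ, hprod, count_roots_prod_qPochhammer hζ]
  exact ⟨hpq, by simpa using congrArg Multiset.card hpq⟩

/-- If two compositions `(p_1,…,p_k)` and `(q_1,…,q_l)` of the same integer `n` satisfy
`∏_{j=1}^l ∏_{a=1}^{q_j} (1−z^a) = ∏_{j=1}^k ∏_{b=1}^{p_j} (1−z^b)` in `ℂ[z]`, then the
multisets `{p_1,…,p_k}` and `{q_1,…,q_l}` coincide; in particular `k = l`. -/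
theorem poly_identity_forces_same_composition {k l n : ℕ}
    (p : Fin k → ℕ) (q : Fin l → ℕ) (hp : ∀ j, 0 < p j) (hq : ∀ j, 0 < q j)
    (hpsum : ∑ j, p j = n) (hqsum : ∑ j, q j = n)
    (h : (∏ j : Fin l, ∏ a ∈ Finset.Icc 1 (q j),
            (1 - (Polynomial.X : Polynomial ℂ) ^ a)) =
          ∏ j : Fin k, ∏ b ∈ Finset.Icc 1 (p j),
            (1 - (Polynomial.X : Polynomial ℂ) ^ b)) :
    (Finset.univ.val.map p = Finset.univ.val.map q) ∧ k = l :=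
  poly_identity_forces_same_composition_general p q hp hq h
end

section
/- The coinvariant algebra of the symmetric group S_n, namely the quotient of the polynomial ring ℂ[x_1, ..., x_n] by the ideal generated by the elementary symmetric polynomials e_1, ..., e_n, has ℂ-dimension n!. -/
/-!
The quotient of `A[x₀, …, x_{m-1}]` by the coefficients of `∏ⱼ (X - xⱼ) - f` is the universal
`A`-algebra over which `f` splits into `m` linear factors. If `f` is monic of degree `m + 1`, then
`x₀` is a root of `f` and the other variables split the cofactor `f / (X - x₀)`; hence the
splitting algebra of `f` over `A` is the splitting algebra of the cofactor over `A[X]/(f)`, which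
is free of rank `m + 1` over `A`. By induction the splitting algebra is free of rank `m!`.
For `f = Xⁿ` the coefficients of `∏ⱼ (X - xⱼ) - Xⁿ` are `±e₁, …, ±eₙ`, so the coinvariant algebra
is the universal splitting algebra of `Xⁿ`.
-/

open Polynomial

noncomputable section

namespace MvPolynomial

variable {R σ : Type*} [CommRing R] [Fintype σ]

theorem coeff_prod_X_sub_C_X {k : ℕ} (hk : k ≤ Fintype.card σ) :
    (∏ i : σ, (Polynomial.X - Polynomial.C (X i : MvPolynomial σ R))).coeff k =
      (-1) ^ (Fintype.card σ - k) * esymm σ R (Fintype.card σ - k) := by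
  have := Multiset.prod_X_sub_C_coeff (Finset.univ.val.map (X : σ → MvPolynomial σ R))
    (k := k) (by simpa using hk)
  rw [Multiset.card_map, Multiset.map_map, ← esymm_eq_multiset_esymm] at this
  exact this

theorem coeff_prod_X_sub_C_X_sub_X_pow (k : ℕ) :
    (∏ i : σ, (Polynomial.X - Polynomial.C (X i : MvPolynomial σ R)) -
        Polynomial.X ^ Fintype.card σ).coeff k =
      if k < Fintype.card σ then (-1) ^ (Fintype.card σ - k) * esymm σ R (Fintype.card σ - k)
      else 0 := by
  nontriviality MvPolynomial σ R
  rw [Polynomial.coeff_sub, Polynomial.coeff_X_pow]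
  rcases lt_trichotomy k (Fintype.card σ) with hk | rfl | hk
  · rw [coeff_prod_X_sub_C_X hk.le, if_neg hk.ne, if_pos hk, sub_zero]
  · simp [coeff_prod_X_sub_C_X]
  · rw [Polynomial.coeff_eq_zero_of_natDegree_lt (by simpa using hk), if_neg hk.ne',
      if_neg hk.not_gt, sub_zero]

end MvPolynomial

namespace Polynomial

variable {A B : Type*} [CommRing A] [CommRing B]

def universalSplittingIdeal (f : A[X]) (m : ℕ) : Ideal (MvPolynomial (Fin m) A) :=
  Ideal.span <| Set.range fun k ↦
    (∏ j, (X - C (MvPolynomial.X j)) - f.map MvPolynomial.C).coeff k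

abbrev UniversalSplittingAlgebra (f : A[X]) (m : ℕ) : Type _ :=
  MvPolynomial (Fin m) A ⧸ f.universalSplittingIdeal m

theorem universalSplittingIdeal_le_ker_iff {f : A[X]} {m : ℕ}
    (ψ : MvPolynomial (Fin m) A →+* B) :
    f.universalSplittingIdeal m ≤ RingHom.ker ψ ↔
      ∏ j, (X - C (ψ (MvPolynomial.X j))) = f.map (ψ.comp MvPolynomial.C) := by
  rw [universalSplittingIdeal, Ideal.span_le, Set.range_subset_iff]
  trans (∏ j, (X - C (MvPolynomial.X j)) - f.map MvPolynomial.C).map ψ = 0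
  · simp [Polynomial.ext_iff, RingHom.mem_ker]
  · simp [Polynomial.map_prod, Polynomial.map_map, sub_eq_zero]

theorem universalSplittingIdeal_X_pow (n : ℕ) :
    (X ^ n : A[X]).universalSplittingIdeal n =
      Ideal.span ((fun i => MvPolynomial.esymm (Fin n) A i) '' Set.Icc 1 n) := by
  have hcoeff (k : ℕ) := MvPolynomial.coeff_prod_X_sub_C_X_sub_X_pow (R := A) (σ := Fin n) k
  simp only [Fintype.card_fin] at hcoeff
  apply le_antisymm
  · rw [universalSplittingIdeal, Ideal.span_le]
    rintro _ ⟨k, rfl⟩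
    dsimp only
    rw [Polynomial.map_pow, map_X, hcoeff]
    split_ifs with hk
    · exact Ideal.mul_mem_left _ _ (Ideal.subset_span ⟨n - k, ⟨by omega, by omega⟩, rfl⟩)
    · exact zero_mem _
  · rw [Ideal.span_le]
    rintro _ ⟨i, ⟨hi, hin⟩, rfl⟩
    have hesymm : MvPolynomial.esymm (Fin n) A i = (-1) ^ i *
        (∏ j, (X - C (MvPolynomial.X j)) - (X ^ n : A[X]).map MvPolynomial.C).coeff (n - i) := by
      rw [Polynomial.map_pow, map_X, hcoeff, if_pos (by omega), Nat.sub_sub_self hin,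
        ← mul_assoc, ← mul_pow, neg_one_mul, neg_neg, one_pow, one_mul]
    dsimp only
    rw [hesymm]
    exact Ideal.mul_mem_left _ _ (Ideal.subset_span ⟨_, rfl⟩)

namespace UniversalSplittingAlgebra

variable {f : A[X]} {m : ℕ}

def root (j : Fin m) : f.UniversalSplittingAlgebra m :=
  Ideal.Quotient.mk _ (MvPolynomial.X j)

theorem prod_X_sub_C_root :
    ∏ j, (X - C (root j : f.UniversalSplittingAlgebra m)) = f.map (algebraMap A _) :=
  (universalSplittingIdeal_le_ker_iff _).1 Ideal.mk_ker.ge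

def lift (φ : A →+* B) (b : Fin m → B) (h : ∏ j, (X - C (b j)) = f.map φ) :
    f.UniversalSplittingAlgebra m →+* B :=
  Ideal.Quotient.lift _ (MvPolynomial.eval₂Hom φ b) fun _ hp ↦
    (universalSplittingIdeal_le_ker_iff _).2 (by simpa using h) hp

section lift

variable {φ : A →+* B} {b : Fin m → B} {h : ∏ j, (X - C (b j)) = f.map φ}

@[simp]
theorem lift_root (j : Fin m) : lift φ b h (root j) = b j :=
  MvPolynomial.eval₂_X ..

@[simp]
theorem lift_algebraMap (a : A) : lift φ b h (algebraMap A _ a) = φ a :=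
  MvPolynomial.eval₂_C ..

theorem ringHom_ext {g₁ g₂ : f.UniversalSplittingAlgebra m →+* B}
    (halg : g₁.comp (algebraMap A _) = g₂.comp (algebraMap A _))
    (hroot : ∀ j, g₁ (root j) = g₂ (root j)) : g₁ = g₂ :=
  Ideal.Quotient.ringHom_ext <| MvPolynomial.ringHom_ext (fun a ↦ congr($halg a)) hroot

end lift

def oneEquiv : (1 : A[X]).UniversalSplittingAlgebra 0 ≃ₐ[A] A :=
  AlgEquiv.ofRingEquiv
    (f := .ofRingHom (lift (RingHom.id A) finZeroElim (by simp)) (algebraMap A _) (by ext; simp)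
      (ringHom_ext (by ext; simp) finZeroElim))
    fun _ ↦ by simp

def cofactor (f : A[X]) : (AdjoinRoot f)[X] :=
  f.map (AdjoinRoot.of f) /ₘ (X - C (AdjoinRoot.root f))

theorem X_sub_C_root_mul_cofactor (f : A[X]) :
    (X - C (AdjoinRoot.root f)) * cofactor f = f.map (AdjoinRoot.of f) :=
  mul_divByMonic_eq_iff_isRoot.2 (AdjoinRoot.isRoot_root f)

theorem X_sub_C_mul_map_cofactor (f : A[X]) (φ : AdjoinRoot f →+* B) :
    (X - C (φ (AdjoinRoot.root f))) * (cofactor f).map φ =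
      f.map (φ.comp (AdjoinRoot.of f)) := by
  rw [← Polynomial.map_map, ← X_sub_C_root_mul_cofactor]
  simp [Polynomial.map_mul]

theorem monic_cofactor (hf : f.Monic) : (cofactor f).Monic :=
  (monic_X_sub_C _).of_mul_monic_left <| X_sub_C_root_mul_cofactor f ▸ hf.map _

theorem natDegree_cofactor [Nontrivial (AdjoinRoot f)] (hf : f.Monic) :
    (cofactor f).natDegree = f.natDegree - 1 := by
  rw [cofactor, natDegree_divByMonic _ (monic_X_sub_C _), hf.natDegree_map, natDegree_X_sub_C]

theorem eval₂_root_zero :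
    f.eval₂ (algebraMap A _) (root 0 : f.UniversalSplittingAlgebra (m + 1)) = 0 := by
  rw [eval₂_eq_eval_map, ← prod_X_sub_C_root, eval_prod]
  exact Finset.prod_eq_zero (Finset.mem_univ 0) (by simp)

variable (f m)

def toCofactor :
    f.UniversalSplittingAlgebra (m + 1) →+* (cofactor f).UniversalSplittingAlgebra m :=
  lift (algebraMap A _) (Fin.cons (algebraMap (AdjoinRoot f) _ (AdjoinRoot.root f)) root) <| by
    rw [Fin.prod_univ_succ]
    simp only [Fin.cons_zero, Fin.cons_succ]
    rw [prod_X_sub_C_root, X_sub_C_mul_map_cofactor, ← AdjoinRoot.algebraMap_eq,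
      ← IsScalarTower.algebraMap_eq]

def ofCofactor :
    (cofactor f).UniversalSplittingAlgebra m →+* f.UniversalSplittingAlgebra (m + 1) :=
  lift (AdjoinRoot.lift (algebraMap A _) (root 0) eval₂_root_zero) (fun i ↦ root i.succ) <| by
    -- both sides are cofactors of the monic, hence cancellable, factor `X - root 0` of `f`
    refine (monic_X_sub_C (root 0 : f.UniversalSplittingAlgebra (m + 1))).isRegular.left ?_
    dsimp only
    rw [← Fin.prod_univ_succ (f := fun j ↦ X - C (root j)), prod_X_sub_C_root]
    have hsplit := X_sub_C_mul_map_cofactor f (AdjoinRoot.lift _ _ (eval₂_root_zero (m := m)))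
    rw [AdjoinRoot.lift_root] at hsplit
    rw [hsplit]
    congr 1
    ext a
    simp

theorem ofCofactor_comp_toCofactor :
    (ofCofactor f m).comp (toCofactor f m) = RingHom.id _ := by
  refine ringHom_ext ?_ (Fin.cases ?_ fun i ↦ ?_)
  · ext a
    simp [toCofactor, ofCofactor, IsScalarTower.algebraMap_apply A (AdjoinRoot f),
      AdjoinRoot.algebraMap_eq]
  · simp [toCofactor, ofCofactor]
  · simp [toCofactor, ofCofactor]

theorem toCofactor_comp_ofCofactor :
    (toCofactor f m).comp (ofCofactor f m) = RingHom.id _ := by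
  refine ringHom_ext (AdjoinRoot.ringHom_ext ?_ ?_) fun i ↦ ?_
  · ext a
    simp [toCofactor, ofCofactor, IsScalarTower.algebraMap_apply A (AdjoinRoot f),
      AdjoinRoot.algebraMap_eq]
  · simp [toCofactor, ofCofactor]
  · simp [toCofactor, ofCofactor]

def equivCofactor :
    f.UniversalSplittingAlgebra (m + 1) ≃ₐ[A] (cofactor f).UniversalSplittingAlgebra m :=
  AlgEquiv.ofRingEquiv
    (f := .ofRingHom _ _ (toCofactor_comp_ofCofactor f m) (ofCofactor_comp_toCofactor f m))
    fun _ ↦ by simp [toCofactor]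

variable {f m}

theorem nonempty_basis (hf : f.Monic) (hdeg : f.natDegree = m) :
    Nonempty (Module.Basis (Fin m.factorial) A (f.UniversalSplittingAlgebra m)) := by
  induction m generalizing A with
  | zero =>
    obtain rfl : f = 1 := hf.natDegree_eq_zero.mp hdeg
    exact ⟨(Module.Basis.singleton (Fin 1) A).map oneEquiv.symm.toLinearEquiv⟩
  | succ m ih =>
    have hf0 : f ≠ 0 := by rintro rfl; simp at hdeg
    have : Nontrivial A := Polynomial.nontrivial_iff.mp (nontrivial_of_ne f 0 hf0)
    let pb := AdjoinRoot.powerBasis' hf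
    have : Nontrivial (AdjoinRoot f) :=
      nontrivial_of_ne (pb.basis ⟨0, by simp [pb, hdeg]⟩) 0 (pb.basis.ne_zero _)
    obtain ⟨b⟩ := ih (monic_cofactor hf) (by rw [natDegree_cofactor hf, hdeg, add_tsub_cancel_right])
    let b' := ((pb.basis.reindex (finCongr hdeg)).smulTower b).map
      (equivCofactor f m).symm.toLinearEquiv
    exact ⟨b'.reindex (finProdFinEquiv.trans (finCongr (Nat.factorial_succ m).symm))⟩

end UniversalSplittingAlgebra

end Polynomial

/-- The coinvariant algebra of the symmetric group `S_n`, i.e. the quotient of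
`ℂ[x_1,…,x_n]` by the ideal generated by the elementary symmetric polynomials
`e_1, …, e_n`, has dimension `n!` over `ℂ`. -/
theorem coinvariant_algebra_dim_factorial (n : ℕ) :
    Module.finrank ℂ
      (MvPolynomial (Fin n) ℂ ⧸
        Ideal.span ((fun i => MvPolynomial.esymm (Fin n) ℂ i) '' Set.Icc 1 n)) = Nat.factorial n := by
  obtain ⟨b⟩ := UniversalSplittingAlgebra.nonempty_basis (monic_X_pow n) (natDegree_X_pow (R := ℂ) n)
  rw [← universalSplittingIdeal_X_pow, Module.finrank_eq_card_basis b, Fintype.card_fin]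
end
end
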